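/- arXiv:2602.02066 — 5 statements merged into one kernel-verified Lean document; each statement's English description precedes it below -/
import Mathlib

section
/- Let X_1,…,X_n be independent uniformly distributed points on the circle [0,1] and P_n = {X_1,…,X_n}. Then for 1 ≤ p < ∞, E[‖dist(·, P_n)‖_{L_p}^p] = 2^{−p} · n!/((p+1)(p+2)⋯(p+n)). In particular, for fixed x ∈ [0,1], E[dist(x, P_n)^p] = 2^{−p} · n!/((p+1)⋯(p+n)). -/
/-!
Read `[0,1]` as the unit circle `ℝ/ℤ`: `tdist` is its metric and the uniform law on `[0,1]`
pushes forward to Haar measure. The points at distance `> t` from `x` form the complement of a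
closed ball of measure `2t`, so for `0 < t ≤ 1/2` independence gives
`P[dist(x, P_n) > t] = (1 - 2t)^n`. The layer-cake formula
`E[F^p] = ∫₀^{1/2} p t^{p-1} P[F > t] dt` turns this into a beta integral, and Fubini gives the
`L_p` statement by averaging the pointwise one over `x`.
-/

open MeasureTheory Set
open scoped ENNReal

/-- Distance on the circle (1-dimensional torus) `[0,1]`. -/
noncomputable def tdist (x y : ℝ) : ℝ := ⨅ k : ℤ, |x + (k : ℝ) - y|

open scoped Nat

lemma lt_ciInf_iff_of_finite {α ι : Type*} [ConditionallyCompleteLinearOrder α] [Finite ι]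
    [Nonempty ι] {f : ι → α} {a : α} : a < ⨅ i, f i ↔ ∀ i, a < f i := by
  refine ⟨fun h i => h.trans_le (ciInf_le (Finite.bddBelow_range _) i), fun h => ?_⟩
  obtain ⟨i, hi⟩ := exists_eq_ciInf_of_finite (f := f)
  exact hi ▸ h i

namespace MeasureTheory

variable {α : Type*} [MeasurableSpace α] {μ : Measure α} {f : α → ℝ} {p : ℝ}

theorem Integrable.integral_rpow_eq_integral_meas_lt_mul
    (hf : Integrable (fun a => f a ^ p) μ) (f_nn : 0 ≤ᵐ[μ] f) (hp : 0 < p) :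
    ∫ a, f a ^ p ∂μ = ∫ t in Ioi 0, p * t ^ (p - 1) * μ.real {a | t < f a} := by
  rw [hf.integral_eq_integral_meas_lt (f_nn.mono fun a ha => Real.rpow_nonneg ha p),
    ← integral_comp_rpow_Ioi_of_pos hp]
  refine setIntegral_congr_fun measurableSet_Ioi fun t (ht : 0 < t) => ?_
  rw [smul_eq_mul]
  congr 1
  refine measureReal_congr (f_nn.mono fun a ha => ?_)
  exact propext (Real.rpow_lt_rpow_iff ht.le ha hp)

theorem integral_rpow_eq_integral_Ioc_meas_lt_mul [IsFiniteMeasure μ] {M : ℝ}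
    (f_mble : AEMeasurable f μ) (f_nn : 0 ≤ᵐ[μ] f) (f_bdd : f ≤ᵐ[μ] fun _ => M)
    (hp : 0 < p) :
    ∫ a, f a ^ p ∂μ = ∫ t in Ioc 0 M, p * t ^ (p - 1) * μ.real {a | t < f a} := by
  have hint : Integrable (fun a => f a ^ p) μ := by
    refine Integrable.of_bound (f_mble.pow_const p).aestronglyMeasurable (M ^ p) ?_
    filter_upwards [f_nn, f_bdd] with a h₀ hM
    rw [Real.norm_of_nonneg (Real.rpow_nonneg h₀ p)]
    exact Real.rpow_le_rpow h₀ hM hp.le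
  rw [hint.integral_rpow_eq_integral_meas_lt_mul f_nn hp,
    setIntegral_eq_of_subset_of_forall_sdiff_eq_zero measurableSet_Ioi Ioc_subset_Ioi_self]
  rintro t ⟨ht, htM⟩
  have hMt : M < t := not_le.1 fun h => htM ⟨ht, h⟩
  have hnull : μ {a | t < f a} = 0 :=
    measure_eq_zero_iff_ae_notMem.2 (f_bdd.mono fun a ha => not_lt.2 (ha.trans hMt.le))
  simp [measureReal_def, hnull]

end MeasureTheory

lemma tdist_eq_dist (x y : ℝ) : tdist x y = dist (x : UnitAddCircle) (y : UnitAddCircle) := by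
  rw [dist_eq_norm, ← AddCircle.coe_sub, UnitAddCircle.norm_eq]
  refine le_antisymm ?_ (le_ciInf fun k => ?_)
  · refine (ciInf_le ⟨0, ?_⟩ (-round (x - y))).trans_eq ?_
    · rintro _ ⟨k, rfl⟩
      exact abs_nonneg _
    · push_cast
      ring_nf
  · calc |x - y - round (x - y)| ≤ |x - y - ((-k : ℤ) : ℝ)| := round_le _ _
      _ = |x + k - y| := by push_cast; ring_nf

lemma Continuous.tdist {α : Type*} [TopologicalSpace α] {f g : α → ℝ} (hf : Continuous f)
    (hg : Continuous g) : Continuous fun a => tdist (f a) (g a) := by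
  simp_rw [tdist_eq_dist]
  fun_prop

lemma tdist_nonneg (x y : ℝ) : 0 ≤ tdist x y := by
  rw [tdist_eq_dist]; exact dist_nonneg

lemma tdist_le_half (x y : ℝ) : tdist x y ≤ 1 / 2 := by
  rw [tdist_eq_dist, dist_eq_norm]
  simpa using
    AddCircle.norm_le_half_period (p := (1 : ℝ)) (x := (x : UnitAddCircle) - y) one_ne_zero

lemma measureReal_lt_tdist (x : ℝ) {t : ℝ} (ht₀ : 0 ≤ t) (ht : t ≤ 1 / 2) :
    (volume.restrict (Icc (0:ℝ) 1)).real {y | t < tdist x y} = 1 - 2 * t := by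
  have hset : {y | t < tdist x y} = (↑) ⁻¹' (Metric.closedBall (x : UnitAddCircle) t)ᶜ := by
    ext y
    simp [tdist_eq_dist, dist_comm]
  have hmk := UnitAddCircle.measurePreserving_mk 0
  rw [zero_add] at hmk
  rw [Measure.restrict_congr_set Ioc_ae_eq_Icc.symm, hset, measureReal_def,
    hmk.measure_preimage measurableSet_closedBall.compl.nullMeasurableSet,
    measure_compl measurableSet_closedBall (measure_ne_top _ _), UnitAddCircle.measure_univ,
    AddCircle.volume_closedBall, min_eq_right (by linarith), ← ENNReal.ofReal_one,
    ← ENNReal.ofReal_sub _ (by positivity), ENNReal.toReal_ofReal (by linarith)]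

lemma iInf_tdist_mem_Icc {ι : Type*} [Finite ι] (x : ℝ) (ω : ι → ℝ) :
    ⨅ i, tdist x (ω i) ∈ Icc (0 : ℝ) (1 / 2) := by
  refine ⟨Real.iInf_nonneg fun i => tdist_nonneg _ _, ?_⟩
  cases isEmpty_or_nonempty ι
  · simp
  · obtain ⟨i, hi⟩ := exists_eq_ciInf_of_finite (f := fun i => tdist x (ω i))
    exact hi ▸ tdist_le_half _ _

lemma Measurable.iInf_tdist {β ι : Type*} [MeasurableSpace β] [Countable ι] {f : β → ℝ}
    {g : ι → β → ℝ} (hf : Measurable f) (hg : ∀ i, Measurable (g i)) :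
    Measurable fun b => ⨅ i, tdist (f b) (g i b) := by
  refine Measurable.iInf fun i => ?_
  simpa only [Function.comp_def] using
    (continuous_fst.tdist continuous_snd).measurable.comp (hf.prodMk (hg i))

lemma measureReal_pi_lt_iInf_tdist {n : ℕ} [NeZero n] (x : ℝ) {t : ℝ} (ht₀ : 0 ≤ t)
    (ht : t ≤ 1 / 2) :
    (Measure.pi fun _ : Fin n => volume.restrict (Icc (0:ℝ) 1)).real
        {ω | t < ⨅ i, tdist x (ω i)} = (1 - 2 * t) ^ n := by
  have hset : {ω : Fin n → ℝ | t < ⨅ i, tdist x (ω i)}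
      = univ.pi fun _ => {y | t < tdist x y} := by
    ext ω
    simp [lt_ciInf_iff_of_finite]
  rw [hset, measureReal_def, Measure.pi_pi, ENNReal.toReal_prod]
  simp only [← measureReal_def, measureReal_lt_tdist x ht₀ ht, Finset.prod_const,
    Finset.card_univ, Fintype.card_fin]

lemma integral_rpow_mul_one_sub_pow (n : ℕ) {p : ℝ} (hp : 0 < p) :
    ∫ u in (0:ℝ)..1, u ^ (p - 1) * (1 - u) ^ n
      = n ! / ∏ j ∈ Finset.range (n + 1), (p + j) := by
  have hbeta : ((∫ u in (0:ℝ)..1, u ^ (p - 1) * (1 - u) ^ n : ℝ) : ℂ)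
      = Complex.betaIntegral p (n + 1) := by
    rw [← intervalIntegral.integral_ofReal, Complex.betaIntegral]
    refine intervalIntegral.integral_congr fun u hu => ?_
    rw [uIcc_of_le zero_le_one] at hu
    simp only [Complex.ofReal_mul, Complex.ofReal_pow, Complex.ofReal_sub, Complex.ofReal_one,
      Complex.ofReal_cpow hu.1, add_sub_cancel_right, Complex.cpow_natCast]
  have := hbeta.trans (Complex.betaIntegral_eval_nat_add_one_right (by simpa using hp) n)
  exact_mod_cast this

lemma integral_Ioc_rpow_mul_one_sub_two_mul_pow (n : ℕ) {p : ℝ} (hp : 0 < p) :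
    ∫ t in Ioc 0 (1 / 2), t ^ (p - 1) * (1 - 2 * t) ^ n
      = 2 ^ (-p) * (n ! / ∏ j ∈ Finset.range (n + 1), (p + j)) := by
  have hscale : EqOn (fun t : ℝ => t ^ (p - 1) * (1 - 2 * t) ^ n)
      (fun t => 2 ^ (1 - p) * ((2 * t) ^ (p - 1) * (1 - 2 * t) ^ n)) (uIcc 0 (1 / 2)) := by
    intro t ht
    rw [uIcc_of_le (by norm_num)] at ht
    simp only [Real.mul_rpow zero_le_two ht.1, ← mul_assoc, ← Real.rpow_add two_pos]
    norm_num
  rw [← intervalIntegral.integral_of_le (by norm_num), intervalIntegral.integral_congr hscale,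
    intervalIntegral.integral_const_mul,
    intervalIntegral.integral_comp_mul_left (fun u => u ^ (p - 1) * (1 - u) ^ n) two_ne_zero]
  norm_num only [integral_rpow_mul_one_sub_pow n hp, smul_eq_mul]
  rw [← mul_assoc, Real.rpow_sub two_pos, Real.rpow_neg zero_le_two, Real.rpow_one]
  ring

theorem integral_pi_iInf_tdist_rpow {n : ℕ} (hn : 0 < n) (x : ℝ) {p : ℝ} (hp : 0 < p) :
    ∫ ω, (⨅ i, tdist x (ω i)) ^ p
        ∂(Measure.pi fun _ : Fin n => volume.restrict (Icc (0:ℝ) 1))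
      = 2 ^ (-p) * n ! / ∏ i ∈ Finset.range n, (p + (i + 1)) := by
  have := NeZero.of_pos hn
  rw [integral_rpow_eq_integral_Ioc_meas_lt_mul
      (measurable_const.iInf_tdist measurable_pi_apply).aemeasurable
      (ae_of_all _ fun ω => (iInf_tdist_mem_Icc x ω).1)
      (ae_of_all _ fun ω => (iInf_tdist_mem_Icc x ω).2) hp,
    setIntegral_congr_fun measurableSet_Ioc fun t ht => by
      rw [measureReal_pi_lt_iInf_tdist x ht.1.le ht.2, mul_assoc]]
  rw [integral_const_mul, integral_Ioc_rpow_mul_one_sub_two_mul_pow n hp,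
    Finset.prod_range_succ']
  push_cast
  rw [add_zero]
  field_simp

/-- For `n` i.i.d. uniform points `X_1,…,X_n` on the circle `[0,1]` and `1 ≤ p < ∞`:
pointwise `E[dist(x, P_n)^p] = 2^{-p}·n!/((p+1)⋯(p+n))` for every `x ∈ [0,1]`, and
consequently `E[‖dist(·, P_n)‖_{L_p}^p] = 2^{-p}·n!/((p+1)⋯(p+n))`. -/
theorem stmt3 (n : ℕ) (hn : 0 < n) (p : ℝ) (hp : 1 ≤ p) :
    (∀ x ∈ Icc (0:ℝ) 1,
      (∫ ω : Fin n → ℝ, (⨅ i, tdist x (ω i)) ^ p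
          ∂(Measure.pi fun _ : Fin n => volume.restrict (Icc (0:ℝ) 1)))
        = (2 : ℝ) ^ (-p) * (n.factorial : ℝ) /
            ∏ i ∈ Finset.range n, (p + ((i : ℝ) + 1))) ∧
    ((∫ ω : Fin n → ℝ, (∫ x in Icc (0:ℝ) 1, (⨅ i, tdist x (ω i)) ^ p)
          ∂(Measure.pi fun _ : Fin n => volume.restrict (Icc (0:ℝ) 1)))
        = (2 : ℝ) ^ (-p) * (n.factorial : ℝ) /
            ∏ i ∈ Finset.range n, (p + ((i : ℝ) + 1))) := by
  have hp₀ : 0 < p := one_pos.trans_le hp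
  refine ⟨fun x _ => integral_pi_iInf_tdist_rpow hn x hp₀, ?_⟩
  rw [integral_integral_swap]
  · simp [integral_pi_iInf_tdist_rpow hn _ hp₀]
  refine Integrable.of_bound (Measurable.aestronglyMeasurable ?_) 1 (ae_of_all _ fun q => ?_)
  · exact (measurable_snd.iInf_tdist fun i =>
      (measurable_pi_apply i).comp measurable_fst).pow_const p
  · obtain ⟨h₀, h₁⟩ := iInf_tdist_mem_Icc q.2 q.1
    rw [Function.uncurry_apply_pair, Real.norm_of_nonneg (Real.rpow_nonneg h₀ p)]
    exact Real.rpow_le_one h₀ (h₁.trans (by norm_num)) hp₀.le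
end

section
/- Auerbach-type lemma: Let D be a set and V_n ⊂ B(D) an n-dimensional subspace of bounded complex-valued functions on D. Then for every ε > 0 there exist functions φ_1,…,φ_n ∈ V_n and points x_1,…,x_n ∈ D such that ‖φ_i‖_∞ ≤ 1 + ε and φ_i(x_j) = δ_{ij} for all i, j. -/
/-! Take a basis `F₁, …, Fₙ` of `V` and put `M(x) = (Fᵢ(xⱼ))` for `x ∈ Dⁿ`. Linear independence of
the `Fᵢ` makes `det M(x) ≠ 0` for some `x`, and `|det M|` is bounded on `Dⁿ`, so some `x` has
`(1 + ε) |det M(x)| ≥ sup |det M|`. By Cramer's rule the Lagrange functions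
`φᵢ = M(x)⁻¹ (F₁, …, Fₙ)ᵢ` are `φᵢ(y) = det M(x with xᵢ replaced by y) / det M(x)`,
so near-maximality of `x` gives `|φᵢ| ≤ 1 + ε`, while `φᵢ(xⱼ) = δᵢⱼ` holds by construction. -/

open Set Matrix Submodule

section EvalMatrix

variable {D ι K : Type*}

def evalMatrix (F : ι → D → K) (x : ι → D) : Matrix ι ι K :=
  Matrix.of fun i j => F i (x j)

theorem evalMatrix_col (F : ι → D → K) (x : ι → D) (j : ι) :
    (evalMatrix F x).col j = (F · (x j)) :=
  rfl

variable [DecidableEq ι]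

theorem evalMatrix_updateCol (F : ι → D → K) (x : ι → D) (i : ι) (y : D) :
    (evalMatrix F x).updateCol i (F · y) = evalMatrix F (Function.update x i y) := by
  ext k j
  rcases eq_or_ne j i with rfl | hj
  · simp [evalMatrix]
  · simp [evalMatrix, hj]

variable [Fintype ι] [Field K]

theorem span_range_eval_eq_top {F : ι → D → K} (hF : LinearIndependent K F) :
    span K (range fun y i => F i y) = ⊤ := by
  by_contra hne
  obtain ⟨f, hf, hker⟩ := exists_le_ker_of_lt_top _ (lt_top_iff_ne_top.2 hne)
  have hf_eval (y : D) : f (F · y) = 0 := hker (subset_span ⟨y, rfl⟩)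
  set c : ι → K := fun i => f fun j => if i = j then 1 else 0
  have hf_apply (v : ι → K) : f v = ∑ i, v i * c i := by
    simp [LinearMap.pi_apply_eq_sum_univ f v, c]
  have hc : c = 0 := by
    refine funext (Fintype.linearIndependent_iff.1 hF c ?_)
    ext y
    simpa [mul_comm, hf_apply] using hf_eval y
  exact hf (LinearMap.ext fun v => by simp [hf_apply, hc])

theorem exists_det_evalMatrix_ne_zero {F : ι → D → K} (hF : LinearIndependent K F) :
    ∃ x : ι → D, (evalMatrix F x).det ≠ 0 := by
  obtain ⟨κ, a, -, hspan, hli⟩ := exists_linearIndependent' K fun y i => F i y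
  rw [span_range_eval_eq_top hF] at hspan
  let b : Module.Basis κ K (ι → K) := .mk hli hspan.ge
  let e : ι ≃ κ := (Pi.basisFun K ι).indexEquiv b
  refine ⟨a ∘ e, ?_⟩
  have hcols : LinearIndependent K (evalMatrix F (a ∘ e)).col := hli.comp e e.injective
  exact ((isUnit_iff_isUnit_det _).1 (linearIndependent_cols_iff_isUnit.1 hcols)).ne_zero

noncomputable def lagrangeFun (F : ι → D → K) (x : ι → D) (i : ι) (y : D) : K :=
  ((evalMatrix F x)⁻¹ *ᵥ (F · y)) i

theorem lagrangeFun_mem_span (F : ι → D → K) (x : ι → D) (i : ι) :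
    lagrangeFun F x i ∈ span K (range F) := by
  have : lagrangeFun F x i = ∑ k, (evalMatrix F x)⁻¹ i k • F k := by
    ext y
    simp [lagrangeFun, mulVec, dotProduct]
  rw [this]
  exact sum_mem fun k _ => smul_mem _ _ (subset_span ⟨k, rfl⟩)

theorem lagrangeFun_apply_self {F : ι → D → K} {x : ι → D} (hx : (evalMatrix F x).det ≠ 0)
    (i j : ι) : lagrangeFun F x i (x j) = if i = j then 1 else 0 := by
  rw [lagrangeFun, ← evalMatrix_col, ← mulVec_single_one, mulVec_mulVec,
    nonsing_inv_mul _ (isUnit_iff_ne_zero.2 hx), one_mulVec, Pi.single_apply]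

theorem lagrangeFun_eq_det_div {F : ι → D → K} {x : ι → D} (hx : (evalMatrix F x).det ≠ 0)
    (i : ι) (y : D) :
    lagrangeFun F x i y =
      (evalMatrix F (Function.update x i y)).det / (evalMatrix F x).det := by
  rw [← evalMatrix_updateCol, ← cramer_apply,
    ← det_smul_inv_mulVec_eq_cramer _ _ (isUnit_iff_ne_zero.2 hx), Pi.smul_apply, smul_eq_mul,
    mul_div_cancel_left₀ _ hx, lagrangeFun]

end EvalMatrix

theorem exists_forall_le_mul_of_bddAbove {α : Type*} {g : α → ℝ} (hg : BddAbove (range g))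
    {a₀ : α} (ha₀ : 0 < g a₀) {c : ℝ} (hc : 1 < c) : ∃ a, 0 < g a ∧ ∀ b, g b ≤ c * g a := by
  have hS : 0 < sSup (range g) := ha₀.trans_le (le_csSup hg ⟨a₀, rfl⟩)
  obtain ⟨_, ⟨a, rfl⟩, ha⟩ :=
    exists_lt_of_lt_csSup (s := range g) ⟨g a₀, a₀, rfl⟩ (div_lt_self hS hc)
  refine ⟨a, (div_pos hS (zero_lt_one.trans hc)).trans ha, fun b => ?_⟩
  calc g b ≤ sSup (range g) := le_csSup hg ⟨b, rfl⟩
    _ ≤ c * g a := ((div_lt_iff₀' (zero_lt_one.trans hc)).1 ha).le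

section NormedField

variable {D ι K : Type*} [Fintype ι] [DecidableEq ι] [NormedField K]

theorem bddAbove_range_norm_det_evalMatrix {F : ι → D → K}
    (hF : ∀ i, ∃ C : ℝ, ∀ y, ‖F i y‖ ≤ C) :
    BddAbove (range fun x => ‖(evalMatrix F x).det‖) := by
  choose C hC using hF
  obtain ⟨M, hM⟩ := (finite_range C).bddAbove
  refine ⟨(Fintype.card ι).factorial • M ^ Fintype.card ι, forall_mem_range.2 fun x => ?_⟩
  exact det_le (abv := NormedField.toAbsoluteValue K) fun i j =>
    (hC i (x j)).trans (hM ⟨i, rfl⟩)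

theorem exists_norm_lagrangeFun_le {F : ι → D → K} (hF : LinearIndependent K F)
    (hbdd : ∀ i, ∃ C : ℝ, ∀ y, ‖F i y‖ ≤ C) {c : ℝ} (hc : 1 < c) :
    ∃ x : ι → D, (evalMatrix F x).det ≠ 0 ∧ ∀ i y, ‖lagrangeFun F x i y‖ ≤ c := by
  obtain ⟨x₀, hx₀⟩ := exists_det_evalMatrix_ne_zero hF
  obtain ⟨x, hx, hmax⟩ := exists_forall_le_mul_of_bddAbove
    (bddAbove_range_norm_det_evalMatrix hbdd) (norm_pos_iff.2 hx₀) hc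
  refine ⟨x, norm_pos_iff.1 hx, fun i y => ?_⟩
  rw [lagrangeFun_eq_det_div (norm_pos_iff.1 hx), norm_div, div_le_iff₀ hx]
  exact hmax _

end NormedField

/-- Auerbach-type lemma: if `V` is an `n`-dimensional subspace of the bounded complex-valued
functions on a set `D`, then for every `ε > 0` there are `φ_1,…,φ_n ∈ V` and points
`x_1,…,x_n ∈ D` with `‖φ_i‖_∞ ≤ 1 + ε` and `φ_i(x_j) = δ_{ij}`. -/
theorem stmt5 {D : Type*} (n : ℕ) (V : Submodule ℂ (D → ℂ))
    (hdim : Module.finrank ℂ V = n)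
    (hbdd : ∀ f ∈ V, ∃ C : ℝ, ∀ x, ‖f x‖ ≤ C)
    (ε : ℝ) (hε : 0 < ε) :
    ∃ (φ : Fin n → (D → ℂ)) (x : Fin n → D),
      (∀ i, φ i ∈ V) ∧
      (∀ i y, ‖φ i y‖ ≤ 1 + ε) ∧
      (∀ i j, φ i (x j) = if i = j then 1 else 0) := by
  obtain ⟨b, hb⟩ := exists_linearIndependent_of_le_finrank hdim.ge
  set F : Fin n → D → ℂ := fun i => b i
  have hF : LinearIndependent ℂ F := hb.map' V.subtype V.ker_subtype
  obtain ⟨x, hx, hnorm⟩ := exists_norm_lagrangeFun_le hF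
    (fun i => hbdd _ (b i).2) (lt_add_of_pos_right 1 hε)
  have hspan : span ℂ (range F) ≤ V := span_le.2 (range_subset_iff.2 fun i => (b i).2)
  exact ⟨lagrangeFun F x, x, fun i => hspan (lagrangeFun_mem_span F x i), hnorm,
    lagrangeFun_apply_self hx⟩
end

section
/- Conditional error bound for weighted least squares: Let Y ⊂ ℂ^D be a seminormed space, V_m ⊂ Y a finite-dimensional subspace on which ‖·‖_Y is a norm, and suppose points x_1,…,x_n ∈ D and weights w_1,…,w_n > 0 satisfy ‖g‖_Y ≤ K·sqrt(Σ_i w_i |g(x_i)|^2) for all g ∈ V_m. Then the weighted least squares projection A(f) = argmin_{g∈V_m} Σ_i w_i|f(x_i)−g(x_i)|^2 is well-defined and satisfies ‖f − A(f)‖_Y ≤ ‖f − g‖_Y + K·sqrt(Σ_i w_i|f(x_i)−g(x_i)|^2) for all f ∈ Y and all g ∈ V_m. -/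
/-!
Sampling with weights `√wᵢ` is a linear map `T` into `𝕜ⁿ` with `‖T u‖² = Σᵢ wᵢ |u(xᵢ)|²`, so
weighted least squares is the orthogonal projection `P` of `T f` onto the finite-dimensional
subspace `T(V)`. Pythagoras gives both that the projection is the unique minimiser in `T(V)` and
that `‖T g - P (T f)‖ ≤ ‖T f - T g‖` for `g ∈ V`; the discretization inequality makes `T`
injective on `V` and turns the latter into `N(g - A f) ≤ K ‖T f - T g‖`, which is the error
bound after the triangle inequality `N(f - A f) ≤ N(f - g) + N(g - A f)`.
-/

namespace Submodule

variable {𝕜 E : Type*} [RCLike 𝕜] [NormedAddCommGroup E] [InnerProductSpace 𝕜 E]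
  {K : Submodule 𝕜 E} [K.HasOrthogonalProjection]

theorem norm_sub_sq_eq_add_norm_starProjection_sub_sq (u : E) {v : E} (hv : v ∈ K) :
    ‖u - v‖ ^ 2 = ‖u - K.starProjection u‖ ^ 2 + ‖K.starProjection u - v‖ ^ 2 := by
  have h := norm_add_sq_eq_norm_sq_add_norm_sq_of_inner_eq_zero _ _
    (K.starProjection_inner_eq_zero u _ (K.sub_mem (K.starProjection_apply_mem u) hv))
  rwa [sub_add_sub_cancel, ← sq, ← sq, ← sq] at h

theorem norm_sub_starProjection_sq_le (u : E) {v : E} (hv : v ∈ K) :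
    ‖u - K.starProjection u‖ ^ 2 ≤ ‖u - v‖ ^ 2 := by
  rw [norm_sub_sq_eq_add_norm_starProjection_sub_sq u hv]
  exact le_add_of_nonneg_right (sq_nonneg _)

theorem norm_starProjection_sub_le (u : E) {v : E} (hv : v ∈ K) :
    ‖K.starProjection u - v‖ ≤ ‖u - v‖ := by
  rw [← pow_le_pow_iff_left₀ (norm_nonneg _) (norm_nonneg _) two_ne_zero,
    norm_sub_sq_eq_add_norm_starProjection_sub_sq u hv]
  exact le_add_of_nonneg_left (sq_nonneg _)

theorem eq_starProjection_of_norm_sub_sq_le {u v : E} (hv : v ∈ K)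
    (h : ‖u - v‖ ^ 2 ≤ ‖u - K.starProjection u‖ ^ 2) : v = K.starProjection u := by
  rw [norm_sub_sq_eq_add_norm_starProjection_sub_sq u hv] at h
  have h0 : ‖K.starProjection u - v‖ = 0 := by nlinarith [norm_nonneg (K.starProjection u - v)]
  rw [norm_eq_zero, sub_eq_zero] at h0
  exact h0.symm

end Submodule

section WeightedSampling

variable {𝕜 D ι : Type*} [RCLike 𝕜] [Fintype ι]

noncomputable def weightedSampling (x : ι → D) (w : ι → ℝ) :
    (D → 𝕜) →ₗ[𝕜] EuclideanSpace 𝕜 ι where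
  toFun u := WithLp.toLp 2 fun i => (√(w i) : 𝕜) * u (x i)
  map_add' u v := by ext i; simp [mul_add]
  map_smul' c u := by ext i; simp [mul_left_comm]

theorem norm_weightedSampling_sq {x : ι → D} {w : ι → ℝ} (hw : ∀ i, 0 ≤ w i) (u : D → 𝕜) :
    ‖weightedSampling x w u‖ ^ 2 = ∑ i, w i * ‖u (x i)‖ ^ 2 := by
  rw [EuclideanSpace.norm_sq_eq]
  refine Finset.sum_congr rfl fun i _ => ?_
  simp [weightedSampling, mul_pow, Real.sq_sqrt (hw i)]

theorem norm_weightedSampling {x : ι → D} {w : ι → ℝ} (hw : ∀ i, 0 ≤ w i) (u : D → 𝕜) :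
    ‖weightedSampling x w u‖ = √(∑ i, w i * ‖u (x i)‖ ^ 2) := by
  rw [← norm_weightedSampling_sq hw, Real.sqrt_sq (norm_nonneg _)]

end WeightedSampling

/-- Conditional error bound for weighted least squares: under the discretization inequality
`‖g‖_Y ≤ K·sqrt(Σ_i w_i|g(x_i)|²)` on a finite-dimensional subspace `V` on which `‖·‖_Y` is
a norm, the weighted least squares minimizer is well-defined (exists uniquely) and satisfies
`‖f − A(f)‖_Y ≤ ‖f − g‖_Y + K·sqrt(Σ_i w_i|f(x_i)−g(x_i)|²)` for all `f` and `g ∈ V`. -/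
theorem stmt8 {D : Type*} (N : Seminorm ℂ (D → ℂ)) (V : Submodule ℂ (D → ℂ))
    [FiniteDimensional ℂ V]
    (hnorm : ∀ g ∈ V, N g = 0 → g = 0)
    (n : ℕ) (x : Fin n → D) (w : Fin n → ℝ) (hw : ∀ i, 0 < w i)
    (K : ℝ) (hK : 0 ≤ K)
    (hdisc : ∀ g ∈ V, N g ≤ K * Real.sqrt (∑ i, w i * ‖g (x i)‖ ^ 2)) :
    ∀ f : D → ℂ, ∃ a : D → ℂ,
      a ∈ V ∧
      (∀ g ∈ V, ∑ i, w i * ‖f (x i) - a (x i)‖ ^ 2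
          ≤ ∑ i, w i * ‖f (x i) - g (x i)‖ ^ 2) ∧
      (∀ a' ∈ V, (∀ g ∈ V, ∑ i, w i * ‖f (x i) - a' (x i)‖ ^ 2
          ≤ ∑ i, w i * ‖f (x i) - g (x i)‖ ^ 2) → a' = a) ∧
      (∀ g ∈ V, N (fun y => f y - a y)
          ≤ N (fun y => f y - g y)
            + K * Real.sqrt (∑ i, w i * ‖f (x i) - g (x i)‖ ^ 2)) := by
  intro f
  set T := weightedSampling (𝕜 := ℂ) x w
  have hw₀ : ∀ i, 0 ≤ w i := fun i => (hw i).le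
  have hres (g : D → ℂ) : ∑ i, w i * ‖f (x i) - g (x i)‖ ^ 2 = ‖T f - T g‖ ^ 2 := by
    rw [← map_sub, norm_weightedSampling_sq hw₀]; rfl
  have hdiscT (u : D → ℂ) (hu : u ∈ V) : N u ≤ K * ‖T u‖ :=
    (norm_weightedSampling hw₀ u).symm ▸ hdisc u hu
  have hinj (u : D → ℂ) (hu : u ∈ V) (h0 : T u = 0) : u = 0 :=
    hnorm u hu <| le_antisymm (by simpa [h0] using hdiscT u hu) (apply_nonneg N u)
  obtain ⟨a, haV, haT⟩ := (V.map T).starProjection_apply_mem (T f)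
  simp only [hres]
  refine ⟨a, haV, fun g hg => ?_, fun a' ha' hmin => ?_, fun g hg => ?_⟩
  · rw [haT]
    exact Submodule.norm_sub_starProjection_sq_le _ (Submodule.mem_map_of_mem hg)
  · have ha'T := Submodule.eq_starProjection_of_norm_sub_sq_le (Submodule.mem_map_of_mem ha')
      (haT ▸ hmin a haV)
    rw [← sub_eq_zero]
    exact hinj _ (sub_mem ha' haV) (by rw [map_sub, ha'T, haT, sub_self])
  · calc N (f - a) = N ((f - g) + (g - a)) := by rw [sub_add_sub_cancel]
      _ ≤ N (f - g) + K * ‖T g - T a‖ := by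
          grw [map_add_le_add, hdiscT _ (sub_mem hg haV), T.map_sub]
      _ ≤ N (f - g) + K * ‖T f - T g‖ := by
          rw [haT, norm_sub_rev]
          gcongr
          exact Submodule.norm_starProjection_sub_le _ (Submodule.mem_map_of_mem hg)
      _ = N (f - g) + K * √(‖T f - T g‖ ^ 2) := by rw [Real.sqrt_sq (norm_nonneg _)]
end

section
/- Curse of dimensionality lower bound for integration of Lipschitz functions: for every quadrature rule Q_n using n nodes x_1,…,x_n ∈ [0,1]^d, the worst-case integration error over F_Lip^d is at least (1/8)·n^{−1/d}. Consequently, for ε ∈ (0, 1/8), any algorithm achieving worst-case integration error ≤ ε on F_Lip^d needs at least (1/(8ε))^d function evaluations. -/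
/-!
Put `a = (2n)^{-1/d}`. The function `y ↦ min_j ‖y - x_j‖_∞` is 1-Lipschitz and vanishes at
every node, so the quadrature rule cannot tell it from its negative, and on one of the two the
error is at least its integral. The balls of radius `a/2` around the nodes have total volume
at most `n a^d = 1/2`, and off them the function is at least `a/2`; hence its integral is at
least `a/4 ≥ n^{-1/d}/8`. The bound on the number of nodes follows by solving for `n`.
-/

open MeasureTheory Set Metric

/-- The class of functions on the cube `[0,1]^d` that are 1-Lipschitz with respect to the
sup-norm `‖·‖_∞` on `ℝ^d` (which is the norm of `Fin d → ℝ`). -/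
def FLipd (d : ℕ) : Set ((Fin d → ℝ) → ℝ) :=
  {f | ∀ x ∈ Icc (0 : Fin d → ℝ) 1, ∀ y ∈ Icc (0 : Fin d → ℝ) 1, |f x - f y| ≤ ‖x - y‖}

theorem LipschitzWith.mem_FLipd {d : ℕ} {f : (Fin d → ℝ) → ℝ} (hf : LipschitzWith 1 f) :
    f ∈ FLipd d := fun x _ y _ => by
  simpa [Real.dist_eq, dist_eq_norm] using hf.dist_le_mul x y

theorem volume_real_Icc_zero_one (d : ℕ) : volume.real (Icc (0 : Fin d → ℝ) 1) = 1 := by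
  simp [measureReal_def, Real.volume_Icc_pi]

theorem volume_real_iUnion_ball_le {ι κ : Type*} [Fintype ι] [Fintype κ] (x : κ → ι → ℝ)
    {r : ℝ} (hr : 0 < r) :
    volume.real (⋃ k, ball (x k) r) ≤ Fintype.card κ * (2 * r) ^ Fintype.card ι :=
  calc volume.real (⋃ k, ball (x k) r) ≤ ∑ k, volume.real (ball (x k) r) :=
        measureReal_iUnion_fintype_le _
    _ = Fintype.card κ * (2 * r) ^ Fintype.card ι := by
        simp [measureReal_def, Real.volume_pi_ball _ hr, hr.le]

theorem exists_mem_FLipd_integral_le_abs_sub {d n : ℕ} (x : Fin n → Fin d → ℝ)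
    (φ : (Fin n → ℝ) → ℝ) {g : (Fin d → ℝ) → ℝ} (hg : LipschitzWith 1 g)
    (hgx : ∀ i, g (x i) = 0) :
    ∃ f ∈ FLipd d, ∫ y in Icc (0 : Fin d → ℝ) 1, g y
      ≤ |(∫ y in Icc (0 : Fin d → ℝ) 1, f y) - φ (fun i => f (x i))| := by
  set I := ∫ y in Icc (0 : Fin d → ℝ) 1, g y
  set c := φ 0
  have hdata : (fun i => g (x i)) = 0 ∧ (fun i => (-g) (x i)) = 0 :=
    ⟨funext hgx, funext fun i => by simp [hgx i]⟩
  have hsum : 2 * I ≤ |I - c| + |-I - c| := by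
    linarith [le_abs_self (I - c), neg_abs_le (-I - c)]
  by_cases hI : I ≤ |I - c|
  · exact ⟨g, hg.mem_FLipd, by rwa [hdata.1]⟩
  · refine ⟨-g, hg.neg.mem_FLipd, ?_⟩
    rw [hdata.2, Pi.neg_def, integral_neg]
    linarith

theorem inv_two_mul_rpow_neg_le {t p : ℝ} (ht : 0 ≤ t) (hp : p ≤ 1) :
    2⁻¹ * t ^ (-p) ≤ (2 * t) ^ (-p) := by
  rw [Real.mul_rpow zero_le_two ht]
  gcongr
  calc (2 : ℝ)⁻¹ = 2 ^ (-1 : ℝ) := (Real.rpow_neg_one 2).symm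
    _ ≤ 2 ^ (-p) := Real.rpow_le_rpow_of_exponent_le one_le_two (by linarith)

theorem le_setIntegral_infDist_range {d n : ℕ} (hd : 0 < d) (hn : 0 < n)
    (x : Fin n → Fin d → ℝ) :
    (1 / 8) * (n : ℝ) ^ (-(d : ℝ)⁻¹) ≤ ∫ y in Icc (0 : Fin d → ℝ) 1, infDist y (range x) := by
  have hnR : (0 : ℝ) < n := Nat.cast_pos.mpr hn
  set a : ℝ := (2 * n : ℝ)⁻¹ ^ (d : ℝ)⁻¹
  have ha : 0 < a := by positivity
  set A := ⋃ i, ball (x i) (a / 2)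
  have hA : volume.real A ≤ 1 / 2 := by
    have had : a ^ d = (2 * n : ℝ)⁻¹ := Real.rpow_inv_natCast_pow (by positivity) hd.ne'
    calc volume.real A ≤ n * (2 * (a / 2)) ^ d := by
          simpa using volume_real_iUnion_ball_le x (half_pos ha)
      _ = 1 / 2 := by rw [mul_div_cancel₀ a two_ne_zero, had]; field_simp
  have hfar : ∀ y ∈ Icc 0 1 \ A, a / 2 ≤ infDist y (range x) := by
    intro y hy
    rw [le_infDist (range_nonempty_iff_nonempty.mpr ⟨⟨0, hn⟩⟩), forall_mem_range]
    exact fun i => not_lt.mp fun h => hy.2 (mem_iUnion_of_mem i h)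
  have hint : IntegrableOn (fun y => infDist y (range x)) (Icc (0 : Fin d → ℝ) 1) :=
    (lipschitz_infDist_pt _).continuous.integrableOn_Icc
  have ha_ge : 2⁻¹ * (n : ℝ) ^ (-(d : ℝ)⁻¹) ≤ a :=
    calc 2⁻¹ * (n : ℝ) ^ (-(d : ℝ)⁻¹) ≤ (2 * n : ℝ) ^ (-(d : ℝ)⁻¹) :=
          inv_two_mul_rpow_neg_le hnR.le (inv_le_one_of_one_le₀ (by exact_mod_cast hd))
      _ = a := by rw [Real.rpow_neg (by positivity), ← Real.inv_rpow (by positivity)]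
  calc (1 / 8) * (n : ℝ) ^ (-(d : ℝ)⁻¹) ≤ a / 2 * (1 - 1 / 2) := by linarith
    _ ≤ a / 2 * (volume.real (Icc (0 : Fin d → ℝ) 1) - volume.real A) := by
        rw [volume_real_Icc_zero_one]; gcongr
    _ ≤ a / 2 * volume.real (Icc 0 1 \ A) := by
        gcongr
        exact le_measureReal_sdiff
          (Bornology.isBounded_iUnion.mpr fun _ => isBounded_ball).measure_lt_top.ne
    _ ≤ ∫ y in Icc 0 1 \ A, infDist y (range x) :=
        setIntegral_ge_of_const_le_real
          (measurableSet_Icc.diff (.iUnion fun _ => isOpen_ball.measurableSet))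
          (measure_ne_top_of_subset sdiff_subset isCompact_Icc.measure_lt_top.ne) hfar
          (hint.mono_set sdiff_subset)
    _ ≤ ∫ y in Icc (0 : Fin d → ℝ) 1, infDist y (range x) :=
        setIntegral_mono_set hint (.of_forall fun _ => infDist_nonneg) sdiff_subset.eventuallyLE

theorem exists_mem_FLipd_lower_bound {d n : ℕ} (hd : 0 < d) (x : Fin n → Fin d → ℝ)
    (φ : (Fin n → ℝ) → ℝ) :
    ∃ f ∈ FLipd d, (1 / 8) * (n : ℝ) ^ (-(d : ℝ)⁻¹)
      ≤ |(∫ y in Icc (0 : Fin d → ℝ) 1, f y) - φ (fun i => f (x i))| := by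
  rcases n.eq_zero_or_pos with rfl | hn
  · refine ⟨0, (LipschitzWith.const' 0).mem_FLipd, ?_⟩
    simp [Real.zero_rpow, hd.ne']
  · obtain ⟨f, hf, hfooled⟩ := exists_mem_FLipd_integral_le_abs_sub x φ
      (lipschitz_infDist_pt (range x)) fun i => infDist_zero_of_mem (mem_range_self i)
    exact ⟨f, hf, (le_setIntegral_infDist_range hd hn x).trans hfooled⟩

theorem one_div_pow_le_of_rpow_neg_inv_le {d : ℕ} (hd : d ≠ 0) {t c : ℝ} (ht : 0 < t)
    (h : t ^ (-(d : ℝ)⁻¹) ≤ c) : (1 / c) ^ d ≤ t := by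
  have hpow : (t ^ (-(d : ℝ)⁻¹)) ^ d = t⁻¹ := by
    rw [Real.rpow_neg ht.le, inv_pow, Real.rpow_inv_natCast_pow ht.le hd]
  have hc : 0 < c := (Real.rpow_pos_of_pos ht _).trans_le h
  rw [one_div, inv_pow, inv_le_comm₀ (by positivity) ht, ← hpow]
  gcongr

/-- Curse of dimensionality for integration of Lipschitz functions: every quadrature rule
using `n` nodes in `[0,1]^d` has worst-case error at least `(1/8)·n^{-1/d}` on `F_Lip^d`
(witnessed by some fooling function), and consequently any rule with worst-case error at
most `ε ∈ (0, 1/8)` needs at least `(1/(8ε))^d` function evaluations. -/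
theorem stmt15 (d : ℕ) (hd : 0 < d) :
    (∀ (n : ℕ) (x : Fin n → (Fin d → ℝ)), (∀ i, x i ∈ Icc (0 : Fin d → ℝ) 1) →
      ∀ φ : (Fin n → ℝ) → ℝ,
        ∃ f ∈ FLipd d,
          (1 / 8) * (n : ℝ) ^ (-(d : ℝ)⁻¹)
            ≤ |(∫ y in Icc (0 : Fin d → ℝ) 1, f y) - φ (fun i => f (x i))|) ∧
    (∀ ε : ℝ, 0 < ε → ε < 1 / 8 →
      ∀ (n : ℕ) (x : Fin n → (Fin d → ℝ)), (∀ i, x i ∈ Icc (0 : Fin d → ℝ) 1) →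
        ∀ φ : (Fin n → ℝ) → ℝ,
          (∀ f ∈ FLipd d,
            |(∫ y in Icc (0 : Fin d → ℝ) 1, f y) - φ (fun i => f (x i))| ≤ ε) →
          (1 / (8 * ε)) ^ d ≤ (n : ℝ)) := by
  refine ⟨fun n x _ φ => exists_mem_FLipd_lower_bound hd x φ,
    fun ε _ hε8 n x _ φ hφ => ?_⟩
  rcases n.eq_zero_or_pos with rfl | hn
  · -- with no nodes the constant `1` vanishes at every node
    obtain ⟨f, hf, hfooled⟩ := exists_mem_FLipd_integral_le_abs_sub x φ
      (LipschitzWith.const' (1 : ℝ)) finZeroElim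
    rw [setIntegral_const, volume_real_Icc_zero_one, one_smul] at hfooled
    linarith [hφ f hf]
  · obtain ⟨f, hf, hfooled⟩ := exists_mem_FLipd_lower_bound hd x φ
    refine one_div_pow_le_of_rpow_neg_inv_le hd.ne' (Nat.cast_pos.mpr hn) ?_
    linarith [hφ f hf]
end

section
/- Lower bound by diagonal extraction (key lemma for entropy bounds): Let D be a set and F ⊂ B(D) bounded. For every δ > 0 and n ∈ ℕ₀ there exist f_0, h_0, …, f_n, h_n ∈ F and x_0, …, x_n ∈ D such that for each k = 0,…,n: f_k(x_j) = h_k(x_j) for all j < k, and |f_k(x_k) − h_k(x_k)| ≥ g_k(F, B(D)) − δ, where g_k denotes the k-th sampling number in the sup-norm. -/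
open scoped ENNReal

/-- The `k`-th sampling number of `F` in the uniform norm (extended-real valued). -/
noncomputable def gsampE {D : Type*} (k : ℕ) (F : Set (D → ℂ)) : ℝ≥0∞ :=
  ⨅ (x : Fin k → D) (Φ : (Fin k → ℂ) → D → ℂ),
    ⨆ f ∈ F, ⨆ y, (‖f y - Φ (fun i => f (x i)) y‖₊ : ℝ≥0∞)

/-!
Any algorithm sampling at `x₀, …, x_{k-1}` may output a function of `F` with the observed
samples, so `g_k` is at most the diameter of the set of pairs in `F` that these samples cannot
tell apart. Boundedness of `F` makes that diameter finite, so some pair `f_k, h_k` attains it up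
to `δ` at some point `x_k`. Choosing `x_k` in this way from `x₀, …, x_{k-1}` for `k = 0, 1, …`
gives the sequence.
-/

theorem exists_seq_of_forall_fin_exists {α : Type*} {P : (k : ℕ) → (Fin k → α) → α → Prop}
    (h : ∀ k xs, ∃ y, P k xs y) : ∃ x : ℕ → α, ∀ k, P k (fun i => x i) (x k) := by
  choose next hnext using h
  let x : ℕ → α := Nat.strongRec fun k prev => next k fun i => prev i i.isLt
  have hx (k : ℕ) : x k = next k fun i => x i := Nat.strongRec_eq _ k
  exact ⟨x, fun k => hx k ▸ hnext k _⟩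

section Sampling

variable {D : Type*} {k : ℕ}

noncomputable def infoDiam (F : Set (D → ℂ)) (xs : Fin k → D) : ℝ≥0∞ :=
  ⨆ (f ∈ F) (g ∈ F) (_ : ∀ i, f (xs i) = g (xs i)) (y : D), (‖f y - g y‖₊ : ℝ≥0∞)

theorem gsampE_le_infoDiam (F : Set (D → ℂ)) (xs : Fin k → D) :
    gsampE k F ≤ infoDiam F xs := by
  classical
  let Φ : (Fin k → ℂ) → D → ℂ := fun a =>
    if hg : ∃ g ∈ F, ∀ i, g (xs i) = a i then hg.choose else 0
  refine (iInf₂_le xs Φ).trans (iSup₂_le fun f hf => ?_)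
  have hex : ∃ g ∈ F, ∀ i, g (xs i) = f (xs i) := ⟨f, hf, fun _ => rfl⟩
  obtain ⟨hgF, hgf⟩ := hex.choose_spec
  simp only [Φ, dif_pos hex]
  exact le_iSup₂_of_le f hf <| le_iSup₂_of_le _ hgF <|
    le_iSup_of_le (fun i => (hgf i).symm) le_rfl

theorem infoDiam_le_of_norm_le {F : Set (D → ℂ)} {C : ℝ} (hC : ∀ f ∈ F, ∀ y, ‖f y‖ ≤ C)
    (xs : Fin k → D) : infoDiam F xs ≤ ENNReal.ofReal (C + C) := by
  simp only [infoDiam, iSup_le_iff]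
  intro f hf g hg _ y
  rw [← ENNReal.ofReal_coe_nnreal, coe_nnnorm]
  exact ENNReal.ofReal_le_ofReal <| (norm_sub_le _ _).trans (add_le_add (hC f hf y) (hC g hg y))

theorem exists_infoDiam_le_add [Nonempty D] {F : Set (D → ℂ)} (hF : F.Nonempty)
    {xs : Fin k → D} (htop : infoDiam F xs ≠ ⊤) {ε : ℝ≥0∞} (hε : ε ≠ 0) :
    ∃ y, ∃ f ∈ F, ∃ g ∈ F, (∀ i, f (xs i) = g (xs i)) ∧
      infoDiam F xs ≤ ‖f y - g y‖₊ + ε := by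
  obtain ⟨f₀, hf₀⟩ := hF
  rcases eq_or_ne (infoDiam F xs) 0 with h0 | h0
  · exact ⟨Classical.arbitrary D, f₀, hf₀, f₀, hf₀, fun _ => rfl, h0.le.trans zero_le⟩
  have hlt : infoDiam F xs - ε < infoDiam F xs := ENNReal.sub_lt_self htop h0 hε
  conv_rhs at hlt => rw [infoDiam]
  simp only [lt_iSup_iff] at hlt
  obtain ⟨f, hf, g, hg, hfg, y, hy⟩ := hlt
  exact ⟨y, f, hf, g, hg, hfg, tsub_le_iff_right.mp hy.le⟩

theorem exists_pair_gsampE_le [Nonempty D] {F : Set (D → ℂ)} (hF : F.Nonempty) {C : ℝ}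
    (hC : ∀ f ∈ F, ∀ y, ‖f y‖ ≤ C) {δ : ℝ} (hδ : 0 < δ) (xs : Fin k → D) :
    ∃ y, ∃ f ∈ F, ∃ g ∈ F, (∀ i, f (xs i) = g (xs i)) ∧
      gsampE k F ≤ ENNReal.ofReal (‖f y - g y‖ + δ) := by
  have htop := ((infoDiam_le_of_norm_le hC xs).trans_lt ENNReal.ofReal_lt_top).ne
  obtain ⟨y, f, hf, g, hg, hfg, hle⟩ :=
    exists_infoDiam_le_add hF htop (ENNReal.ofReal_pos.mpr hδ).ne'
  refine ⟨y, f, hf, g, hg, hfg, (gsampE_le_infoDiam F xs).trans (hle.trans_eq ?_)⟩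
  rw [ENNReal.ofReal_add (norm_nonneg _) hδ.le, ← ENNReal.ofReal_coe_nnreal, coe_nnnorm]

end Sampling

/-- Diagonal extraction lemma: for a bounded class `F ⊂ B(D)`, every `δ > 0` and `n`,
there are `f_0,h_0,…,f_n,h_n ∈ F` and points `x_0,…,x_n ∈ D` such that `f_k` and `h_k`
agree at `x_j` for `j < k` while `|f_k(x_k) − h_k(x_k)| ≥ g_k(F, B(D)) − δ`. -/
theorem stmt16 {D : Type*} [Nonempty D] (F : Set (D → ℂ)) (hne : F.Nonempty)
    (hbdd : ∃ C : ℝ, ∀ f ∈ F, ∀ x, ‖f x‖ ≤ C)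
    (δ : ℝ) (hδ : 0 < δ) (n : ℕ) :
    ∃ (f h : Fin (n + 1) → D → ℂ) (x : Fin (n + 1) → D),
      (∀ k, f k ∈ F ∧ h k ∈ F) ∧
      (∀ k j : Fin (n + 1), j < k → f k (x j) = h k (x j)) ∧
      (∀ k : Fin (n + 1),
        gsampE (k : ℕ) F ≤ ENNReal.ofReal (‖f k (x k) - h k (x k)‖ + δ)) := by
  obtain ⟨C, hC⟩ := hbdd
  obtain ⟨x, hx⟩ :=
    exists_seq_of_forall_fin_exists fun k => exists_pair_gsampE_le (k := k) hne hC hδ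
  choose f hf h hh hagree hgsamp using hx
  exact ⟨fun k => f k, fun k => h k, fun k => x k, fun k => ⟨hf k, hh k⟩,
    fun k j hjk => hagree k ⟨j, hjk⟩, fun k => hgsamp k⟩
end
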